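/- Let T be a truss, N a Nijenhuis operator on T, and for k ∈ ℕ write a ∘_k b = [N^k(a)b, N^k(ab), aN^k(b)] (with N^0 = id, so ∘_0 is the original multiplication). Then for all k, l ∈ ℕ and a,b ∈ T: (i) [N^l(a) ∘_k b, N^l(a ∘_k b), a ∘_k N^l(b)] = a ∘_{k+l} b, i.e. the Nijenhuis product of N^l formed in the truss T[N^k] equals the product of T[N^{k+l}]; (ii) N^l(a ∘_{k+l} b) = N^l(a) ∘_k N^l(b), i.e. N^l is a Nijenhuis operator on the truss T[N^k]. -/

import Mathlib

/-- A truss: an abelian heap with an associative multiplication distributing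
over the ternary heap operation on both sides. -/
class Truss (T : Type*) extends Mul T where
  hbr : T → T → T → T
  hbr_assoc : ∀ a b c d f : T, hbr (hbr a b c) d f = hbr a b (hbr c d f)
  hbr_idl : ∀ a b : T, hbr a a b = b
  hbr_idr : ∀ a b : T, hbr b a a = b
  hbr_comm : ∀ a b c : T, hbr a b c = hbr c b a
  mul_assoc' : ∀ a b c : T, a * b * c = a * (b * c)
  mul_hbr_left : ∀ a b c d : T, a * hbr b c d = hbr (a * b) (a * c) (a * d)
  mul_hbr_right : ∀ a b c d : T, hbr b c d * a = hbr (b * a) (c * a) (d * a)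

open Truss

variable {T : Type*} [Truss T]

/-- The Nijenhuis product `a ∘_N b = [N(a)b, N(ab), aN(b)]`. -/
def nijProd (N : T → T) (a b : T) : T :=
  hbr (N a * b) (N (a * b)) (a * N b)

/-- `N` is a heap endomorphism of the truss `T`. -/
def IsHeapEndo (N : T → T) : Prop :=
  ∀ a b c : T, N (hbr a b c) = hbr (N a) (N b) (N c)

/-- `N` is a Nijenhuis operator: a heap endomorphism with `N(a ∘_N b) = N(a)N(b)`. -/
def IsNijenhuis (N : T → T) : Prop :=
  IsHeapEndo N ∧ ∀ a b : T, N (nijProd N a b) = N a * N b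

/-- The product of the truss `T[N^k]`: `a ∘_k b = [N^k(a)b, N^k(ab), aN^k(b)]`. -/
def nijProdIter (N : T → T) (k : ℕ) (a b : T) : T :=
  hbr (N^[k] a * b) (N^[k] (a * b)) (a * N^[k] b)

/-!
Fixing a base point turns the abelian heap into an abelian group in which `[x, y, z] = x - y + z`.
Iterating the Nijenhuis identity `N(N x · y) - N²(xy) + N(x · N y) = N x · N y` gives, by a double
induction on `i` and `j`,
`N^m(N^i a · N^j b) = N^{m+j}(N^i a · b) - N^{m+i+j}(ab) + N^{m+i}(a · N^j b)`.
This rewrites every term on both sides of (i) and (ii) through elements of the forms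
`N^p(N^q a · b)`, `N^p(a · N^q b)` and `N^p(ab)`, after which both become identities in an abelian
group.
-/

abbrev heapAddCommGroup (e : T) : AddCommGroup T :=
  letI : Zero T := ⟨e⟩
  letI : Add T := ⟨fun x y => hbr x e y⟩
  letI : Neg T := ⟨fun x => hbr e x e⟩
  { nsmul := nsmulRec
    zsmul := zsmulRec
    add_assoc := fun x y z => hbr_assoc x e y e z
    zero_add := hbr_idl e
    add_zero := hbr_idr e
    add_comm := fun x y => hbr_comm x e y
    neg_add_cancel := fun x => by
      show hbr (hbr e x e) e x = e
      rw [hbr_assoc, hbr_idl, hbr_idr] }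

theorem hbr_eq_sub_add (e : T) :
    letI := heapAddCommGroup e
    ∀ x y z : T, hbr x y z = x - y + z := by
  intro x y z
  show hbr x y z = hbr (hbr x e (hbr e y e)) e z
  rw [hbr_assoc, hbr_assoc e y e, hbr_idl e z, ← hbr_assoc x e e y z, hbr_idr e x]

theorem IsHeapEndo.iterate {N : T → T} (hN : IsHeapEndo N) (m : ℕ) : IsHeapEndo N^[m] := by
  induction m with
  | zero => intro a b c; rfl
  | succ m ih =>
    intro a b c
    rw [Function.iterate_succ_apply', ih, hN]
    simp only [Function.iterate_succ_apply']

namespace IsNijenhuis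

variable {N : T → T} (hN : IsNijenhuis N)
include hN

theorem iterate_apply_mul_apply (m : ℕ) (x y : T) :
    N^[m] (N x * N y) = hbr (N^[m + 1] (N x * y)) (N^[m + 2] (x * y)) (N^[m + 1] (x * N y)) := by
  rw [← hN.2, nijProd, ← Function.iterate_succ_apply, hN.1.iterate, ← Function.iterate_succ_apply]

theorem iterate_iterate_mul_iterate (m i j : ℕ) (a b : T) :
    N^[m] (N^[i] a * N^[j] b) =
      hbr (N^[m + j] (N^[i] a * b)) (N^[m + i + j] (a * b)) (N^[m + i] (a * N^[j] b)) := by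
  induction j generalizing i m with
  | zero =>
    simp only [Function.iterate_zero_apply, Nat.add_zero, hbr_idr]
  | succ j ihj =>
    induction i generalizing m with
    | zero =>
      simp only [Function.iterate_zero_apply, Nat.add_zero, hbr_idl]
    | succ i ihi =>
      have h := hN.iterate_apply_mul_apply m (N^[i] a) (N^[j] b)
      simp only [← Function.iterate_succ_apply' N] at h
      rw [h, ihj (m + 1) (i + 1), ihj (m + 2) i, ihi (m + 1)]
      let _ := heapAddCommGroup (a * b)
      simp only [hbr_eq_sub_add (a * b), Nat.add_comm, Nat.add_left_comm]
      abel

end IsNijenhuis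

/-- Let `N` be a Nijenhuis operator on a truss `T` and write
`a ∘_k b = [N^k(a)b, N^k(ab), aN^k(b)]`. Then for all `k, l ∈ ℕ` and `a, b ∈ T`:
(i) `[N^l(a) ∘_k b, N^l(a ∘_k b), a ∘_k N^l(b)] = a ∘_{k+l} b`, i.e. the Nijenhuis
product of `N^l` formed in `T[N^k]` is the product of `T[N^{k+l}]`; and
(ii) `N^l(a ∘_{k+l} b) = N^l(a) ∘_k N^l(b)`, i.e. `N^l` is a Nijenhuis operator on
`T[N^k]`. -/
theorem iterate_nijenhuis_on_deformed_truss (T : Type*) [Truss T] (N : T → T)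
    (hN : IsNijenhuis N) (k l : ℕ) :
    (∀ a b : T,
      hbr (nijProdIter N k (N^[l] a) b) (N^[l] (nijProdIter N k a b))
          (nijProdIter N k a (N^[l] b)) = nijProdIter N (k + l) a b) ∧
    (∀ a b : T,
      N^[l] (nijProdIter N (k + l) a b) = nijProdIter N k (N^[l] a) (N^[l] b)) := by
  have spread (i j : ℕ) (a b : T) := hN.iterate_iterate_mul_iterate 0 i j a b
  simp only [Function.iterate_zero_apply, Nat.zero_add] at spread
  refine ⟨fun a b => ?_, fun a b => ?_⟩
  · simp only [nijProdIter]
    rw [hN.1.iterate]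
    simp only [← Function.iterate_add_apply]
    rw [spread l k, spread k l]
    let _ := heapAddCommGroup (a * b)
    simp only [hbr_eq_sub_add (a * b), Nat.add_comm]
    abel
  · simp only [nijProdIter]
    rw [hN.1.iterate]
    simp only [← Function.iterate_add_apply]
    rw [spread (k + l) l, hN.iterate_iterate_mul_iterate k l l, spread l (k + l)]
    let _ := heapAddCommGroup (a * b)
    simp only [hbr_eq_sub_add (a * b), Nat.add_comm, Nat.add_left_comm]
    abel
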